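/- arXiv:2503.00213 — 3 statements merged into one kernel-verified Lean document; each statement's English description precedes it below -/
import Mathlib

section
/- For all x, x' ∈ [0,1], the series 2·∑_{n=1}^∞ sin(nπx)·sin(nπx')/(n²π²) converges to min{x,x'} − x·x'. -/
open Real

lemma bern2 (t : ℝ) :
    (Polynomial.map (algebraMap ℚ ℝ) (Polynomial.bernoulli 2)).eval t = t^2 - t + 1/6 := by
  have h2 : (bernoulli 2 : ℚ) = 1/6 := by
    rw [bernoulli_eq_bernoulli'_of_ne_one (by norm_num), bernoulli'_two]
  simp [Polynomial.bernoulli_def, Finset.sum_range_succ, h2]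
  ring

lemma cos_sum (t : ℝ) (ht : t ∈ Set.Icc (0:ℝ) 1) :
    HasSum (fun n : ℕ => 1 / (n:ℝ)^2 * Real.cos (2 * π * n * t)) (π^2 * (t^2 - t + 1/6)) := by
  have h := hasSum_one_div_nat_pow_mul_cos (k := 1) one_ne_zero ht
  simp only [show 2*1 = 2 from rfl, bern2] at h
  convert h using 1
  rw [show ((-1:ℝ))^(1+1) = 1 by norm_num,
    show ((Nat.factorial 2 : ℕ):ℝ) = 2 by norm_num [Nat.factorial]]
  ring

/-- Mercer expansion of the Brownian bridge kernel: for `x, x' ∈ [0,1]`,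
`2 ∑_{n≥1} sin(nπx) sin(nπx') / (n²π²) = min x x' - x x'`. -/
theorem brownian_bridge_mercer (x x' : ℝ) (hx : x ∈ Set.Icc (0:ℝ) 1)
    (hx' : x' ∈ Set.Icc (0:ℝ) 1) :
    HasSum (fun n : ℕ+ =>
        2 * Real.sin (n * π * x) * Real.sin (n * π * x') / ((n:ℝ)^2 * π^2))
      (min x x' - x * x') := by
  obtain ⟨hx0, hx1⟩ := hx
  obtain ⟨hx'0, hx'1⟩ := hx'
  set t₁ : ℝ := |x - x'| / 2 with ht₁
  set t₂ : ℝ := (x + x') / 2 with ht₂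
  have habs : |x - x'| ≤ 1 := abs_le.mpr ⟨by linarith, by linarith⟩
  have h1 := cos_sum t₁ ⟨by positivity, by rw [ht₁]; linarith⟩
  have h2 := cos_sum t₂ ⟨by rw [ht₂]; linarith, by rw [ht₂]; linarith⟩
  have h3 := (h1.sub h2).div_const (π^2)
  have hzero : ∀ m ∉ Set.range ((↑) : ℕ+ → ℕ),
      (1 / (m:ℝ)^2 * Real.cos (2*π*m*t₁) - 1 / (m:ℝ)^2 * Real.cos (2*π*m*t₂)) / π^2 = 0 := by
    intro m hm
    have hm0 : m = 0 := by
      by_contra h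
      exact hm ⟨⟨m, Nat.pos_of_ne_zero h⟩, rfl⟩
    simp [hm0]
  have key : HasSum (fun n : ℕ+ =>
      (1 / ((n:ℕ):ℝ)^2 * Real.cos (2*π*(n:ℕ)*t₁) - 1 / ((n:ℕ):ℝ)^2 * Real.cos (2*π*(n:ℕ)*t₂)) / π^2)
      ((π^2 * (t₁^2 - t₁ + 1/6) - π^2 * (t₂^2 - t₂ + 1/6)) / π^2) :=
    (Function.Injective.hasSum_iff PNat.coe_injective hzero).mpr h3
  have hterm : ∀ n : ℕ+,
      2 * Real.sin (n * π * x) * Real.sin (n * π * x') / ((n:ℝ)^2 * π^2) =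
      (1 / ((n:ℕ):ℝ)^2 * Real.cos (2*π*(n:ℕ)*t₁) - 1 / ((n:ℕ):ℝ)^2 * Real.cos (2*π*(n:ℕ)*t₂)) / π^2 := by
    intro n
    have hc1 : Real.cos (2*π*(n:ℝ)*t₁) = Real.cos ((n:ℝ)*π*x - (n:ℝ)*π*x') := by
      rw [ht₁, show (2*π*(n:ℝ)*(|x-x'|/2)) = |(n:ℝ)*π*x - (n:ℝ)*π*x'| by
        rw [show (n:ℝ)*π*x - (n:ℝ)*π*x' = ((n:ℝ)*π)*(x-x') by ring, abs_mul,
          abs_of_nonneg (by positivity : (0:ℝ) ≤ (n:ℝ)*π)]; ring]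
      exact Real.cos_abs _
    have hc2 : Real.cos (2*π*(n:ℝ)*t₂) = Real.cos ((n:ℝ)*π*x + (n:ℝ)*π*x') := by
      rw [ht₂]; congr 1; ring
    rw [hc1, hc2, Real.cos_sub, Real.cos_add]
    field_simp
    ring
  have hS : (π^2 * (t₁^2 - t₁ + 1/6) - π^2 * (t₂^2 - t₂ + 1/6)) / π^2 = min x x' - x * x' := by
    rcases le_total x x' with h | h
    · rw [min_eq_left h, ht₁, ht₂, abs_of_nonpos (by linarith)]
      field_simp
      ring
    · rw [min_eq_right h, ht₁, ht₂, abs_of_nonneg (by linarith)]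
      field_simp
      ring
  simp only [hterm]
  rw [← hS]
  exact key
end

section
/- Let k_S(x,x') = 2∑_{n=1}^S sin(nπx)sin(nπx')/(n²π²) on [0,1]×[0,1]. Then there exists K > 0 such that for every S ∈ ℕ and every x, y, x' ∈ [0,1], |k_S(x,x') − k_S(y,x')| ≤ K|x − y|; consequently the limit kernel k(x,x') = min{x,x'} − xx' is Lipschitz continuous in its first argument uniformly in the second. -/
open Real Finset

/-!
Estimating term by term loses a factor `log (1 / |x - y|)`; the cancellation is made visible by
the product-to-sum formula, which gives `∂ₓ k_S(x, x') = (F_S(π (x + x')) - F_S(π (x - x'))) / π`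
with `F_S(θ) = ∑_{n ≤ S} sin (n θ) / n`, the partial sums of the Fourier series of the sawtooth
wave. These are bounded by `1 + 3π` uniformly in `S` and `θ`: by periodicity and oddness one may
take `θ ∈ (0, π]`; each of the first `⌈1/θ⌉` terms is at most `θ`, and on the remaining ones Abel
summation against the Dirichlet bound `|∑_{n ≤ m} sin (n θ)| ≤ 1 / sin (θ / 2) ≤ π / θ` gives at
most `2π`. The mean value theorem concludes. The limit kernel is the sum of the `1`-Lipschitz
`min · x'` and the `|x'|`-Lipschitz `- · x'`.
-/

theorem abs_sin_half_mul_sum_range_sin_le_one (θ : ℝ) (m : ℕ) :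
    |sin (θ / 2) * ∑ i ∈ range m, sin ((i + 1) * θ)| ≤ 1 := by
  have telescope : 2 * sin (θ / 2) * ∑ i ∈ range m, sin ((i + 1) * θ)
      = cos (θ / 2) - cos ((m + 1 / 2) * θ) := by
    induction m with
    | zero => simp [div_eq_inv_mul]
    | succ m ih =>
      rw [sum_range_succ, mul_add, ih, mul_right_comm, two_mul_sin_mul_sin]
      push_cast
      ring_nf
  have hcos : |cos (θ / 2) - cos ((m + 1 / 2) * θ)| ≤ 2 :=
    (abs_sub _ _).trans (by linarith [abs_cos_le_one (θ / 2), abs_cos_le_one ((m + 1 / 2) * θ)])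
  rw [← telescope, mul_assoc, abs_mul, abs_two] at hcos
  linarith

theorem abs_sum_range_sin_le_pi_div {θ : ℝ} (hθ : 0 < θ) (hθπ : θ ≤ π) (m : ℕ) :
    |∑ i ∈ range m, sin ((i + 1) * θ)| ≤ π / θ := by
  have jordan : θ / π ≤ sin (θ / 2) := by
    have := mul_le_sin (x := θ / 2) (by positivity) (by linarith)
    calc θ / π = 2 / π * (θ / 2) := by ring
      _ ≤ sin (θ / 2) := this
  have h := abs_sin_half_mul_sum_range_sin_le_one θ m
  rw [abs_mul, abs_of_pos ((by positivity : 0 < θ / π).trans_le jordan)] at h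
  have hθS : θ / π * |∑ i ∈ range m, sin ((i + 1) * θ)| ≤ 1 :=
    (mul_le_mul_of_nonneg_right jordan (abs_nonneg _)).trans h
  rw [div_mul_eq_mul_div, div_le_one pi_pos] at hθS
  rwa [le_div_iff₀ hθ, mul_comm]

theorem abs_sum_Ico_mul_le_of_antitone {a g : ℕ → ℝ} {B : ℝ} (ha : Antitone a)
    (ha₀ : ∀ i, 0 ≤ a i) (hg : ∀ k, |∑ i ∈ range k, g i| ≤ B) {M N : ℕ}
    (hMN : M ≤ N) :
    |∑ i ∈ Ico M N, a i * g i| ≤ 2 * B * a M := by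
  set G : ℕ → ℝ := fun k ↦ ∑ i ∈ range k, g i
  have abel : ∀ n, M ≤ n →
      |∑ i ∈ Ico M n, a i * g i - a n * G n| ≤ B * (2 * a M - a n) := by
    intro n hn
    induction n, hn using Nat.le_induction with
    | base =>
      rw [Ico_self, sum_empty, zero_sub, abs_neg, abs_mul, abs_of_nonneg (ha₀ M)]
      nlinarith [mul_le_mul_of_nonneg_left (hg M) (ha₀ M)]
    | succ n hMn ih =>
      have hstep : ∑ i ∈ Ico M (n + 1), a i * g i - a (n + 1) * G (n + 1)
          = (∑ i ∈ Ico M n, a i * g i - a n * G n) + (a n - a (n + 1)) * G (n + 1) := by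
        simp only [G, sum_Ico_succ_top hMn, sum_range_succ]; ring
      have hdecr : 0 ≤ a n - a (n + 1) := sub_nonneg.2 (ha n.le_succ)
      rw [hstep]
      calc _ ≤ B * (2 * a M - a n) + (a n - a (n + 1)) * B :=
            (abs_add_le _ _).trans <| add_le_add ih <| by
              rw [abs_mul, abs_of_nonneg hdecr]; exact mul_le_mul_of_nonneg_left (hg _) hdecr
        _ = B * (2 * a M - a (n + 1)) := by ring
  have hlast : |a N * G N| ≤ a N * B := by
    rw [abs_mul, abs_of_nonneg (ha₀ N)]; exact mul_le_mul_of_nonneg_left (hg N) (ha₀ N)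
  have := abs_sub_abs_le_abs_sub (∑ i ∈ Ico M N, a i * g i) (a N * G N)
  linarith [abel N hMN]

noncomputable def sawtoothPartialSum (N : ℕ) (θ : ℝ) : ℝ :=
  ∑ n ∈ range N, sin ((n + 1) * θ) / (n + 1)

theorem abs_sawtoothPartialSum_le_mul (N : ℕ) (θ : ℝ) :
    |sawtoothPartialSum N θ| ≤ N * |θ| := by
  calc |sawtoothPartialSum N θ| ≤ ∑ n ∈ range N, |sin ((n + 1) * θ) / (n + 1)| :=
        abs_sum_le_sum_abs _ _
    _ ≤ ∑ n ∈ range N, |θ| := by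
        refine sum_le_sum fun n _ ↦ ?_
        rw [abs_div, abs_of_pos (by positivity : (0 : ℝ) < n + 1), div_le_iff₀ (by positivity)]
        calc |sin ((n + 1) * θ)| ≤ |(n + 1) * θ| := abs_sin_le_abs
          _ = |θ| * (n + 1) := by rw [abs_mul, abs_of_pos (by positivity), mul_comm]
    _ = N * |θ| := by rw [sum_const, card_range, nsmul_eq_mul]

theorem abs_sawtoothPartialSum_le_of_pos_of_le_pi {θ : ℝ} (hθ : 0 < θ) (hθπ : θ ≤ π)
    (N : ℕ) :
    |sawtoothPartialSum N θ| ≤ 1 + 3 * π := by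
  set M := ⌈θ⁻¹⌉₊
  have hM : θ⁻¹ ≤ M := Nat.le_ceil _
  have hMθ : M * θ ≤ 1 + π := by
    have := Nat.ceil_lt_add_one (inv_nonneg.2 hθ.le)
    have : θ⁻¹ * θ = 1 := inv_mul_cancel₀ hθ.ne'
    nlinarith
  have head : ∀ m ≤ M, |sawtoothPartialSum m θ| ≤ 1 + π := fun m hm ↦ by
    refine (abs_sawtoothPartialSum_le_mul m θ).trans ?_
    rw [abs_of_pos hθ]
    exact le_trans (by gcongr) hMθ
  rcases le_total N M with hNM | hMN
  · linarith [head N hNM, pi_pos]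
  have tail : |∑ n ∈ Ico M N, (1 / ((n : ℝ) + 1)) * sin ((n + 1) * θ)| ≤ 2 * π := by
    refine (abs_sum_Ico_mul_le_of_antitone (B := π / θ) ?_ (fun i ↦ by positivity)
      (abs_sum_range_sin_le_pi_div hθ hθπ) hMN).trans ?_
    · exact fun i j hij ↦ one_div_le_one_div_of_le (by positivity) (by gcongr)
    · have : 1 / ((M : ℝ) + 1) ≤ θ := by
        rw [div_le_iff₀ (by positivity)]
        have := (inv_le_iff_one_le_mul₀ hθ).1 hM
        nlinarith
      calc 2 * (π / θ) * (1 / ((M : ℝ) + 1)) ≤ 2 * (π / θ) * θ := by gcongr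
        _ = 2 * π := by field_simp
  have split := sum_range_add_sum_Ico (fun n : ℕ ↦ sin ((n + 1) * θ) / (n + 1)) hMN
  simp only [one_div_mul_eq_div] at tail
  rw [sawtoothPartialSum, ← split]
  calc _ ≤ |sawtoothPartialSum M θ| + |∑ n ∈ Ico M N, sin ((n + 1) * θ) / (n + 1)| :=
        abs_add_le _ _
    _ ≤ (1 + π) + 2 * π := add_le_add (head M le_rfl) tail
    _ = 1 + 3 * π := by ring

theorem sawtoothPartialSum_periodic (N : ℕ) : Function.Periodic (sawtoothPartialSum N) (2 * π) :=
  fun θ ↦ sum_congr rfl fun n _ ↦ by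
    rw [mul_add, show ((n : ℝ) + 1) = ((n + 1 : ℕ) : ℝ) by push_cast; ring,
      sin_add_nat_mul_two_pi]

theorem sawtoothPartialSum_neg (N : ℕ) (θ : ℝ) :
    sawtoothPartialSum N (-θ) = -sawtoothPartialSum N θ := by
  simp only [sawtoothPartialSum, mul_neg, sin_neg, neg_div, sum_neg_distrib]

theorem abs_sawtoothPartialSum_le (N : ℕ) (θ : ℝ) :
    |sawtoothPartialSum N θ| ≤ 1 + 3 * π := by
  obtain ⟨φ, ⟨hφl, hφr⟩, hθφ⟩ :=
    (sawtoothPartialSum_periodic N).exists_mem_Ico two_pi_pos θ (-π)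
  rw [hθφ]
  rcases lt_trichotomy φ 0 with hφ | rfl | hφ
  · rw [← neg_neg φ, sawtoothPartialSum_neg, abs_neg]
    exact abs_sawtoothPartialSum_le_of_pos_of_le_pi (neg_pos.2 hφ) (by linarith) N
  · simp [sawtoothPartialSum]; positivity
  · exact abs_sawtoothPartialSum_le_of_pos_of_le_pi hφ (by linarith) N

noncomputable def truncatedBridgeKernel (S : ℕ) (x x' : ℝ) : ℝ :=
  ∑ n ∈ range S,
    2 * sin ((n + 1) * π * x) * sin ((n + 1) * π * x') / (((n : ℝ) + 1) ^ 2 * π ^ 2)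

theorem hasDerivAt_truncatedBridgeKernel (S : ℕ) (x' t : ℝ) :
    HasDerivAt (truncatedBridgeKernel S · x')
      ((sawtoothPartialSum S (π * (t + x')) - sawtoothPartialSum S (π * (t - x'))) / π) t := by
  rw [sawtoothPartialSum, sawtoothPartialSum, ← sum_sub_distrib, sum_div]
  refine HasDerivAt.fun_sum fun n _ ↦ ?_
  have inner : HasDerivAt (fun x : ℝ ↦ (n + 1) * π * x) ((n + 1) * π) t := by
    simpa using (hasDerivAt_id t).const_mul (((n : ℝ) + 1) * π)
  refine (((inner.sin.const_mul 2).mul_const _).div_const _).congr_deriv ?_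
  simp only [mul_add, mul_sub, ← mul_assoc, sin_add, sin_sub]
  field_simp
  ring

theorem abs_truncatedBridgeKernel_sub_le (S : ℕ) (x y x' : ℝ) :
    |truncatedBridgeKernel S x x' - truncatedBridgeKernel S y x'|
      ≤ 2 * (1 + 3 * π) / π * |x - y| := by
  have bound : ∀ t,
      ‖(sawtoothPartialSum S (π * (t + x')) - sawtoothPartialSum S (π * (t - x'))) / π‖
        ≤ 2 * (1 + 3 * π) / π := fun t ↦ by
    rw [norm_div, norm_of_nonneg pi_pos.le, two_mul]
    gcongr
    exact (norm_sub_le _ _).trans (add_le_add (abs_sawtoothPartialSum_le _ _)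
      (abs_sawtoothPartialSum_le _ _))
  simpa only [norm_eq_abs] using convex_univ.norm_image_sub_le_of_norm_hasDerivWithin_le
    (fun t _ ↦ (hasDerivAt_truncatedBridgeKernel S x' t).hasDerivWithinAt) (fun t _ ↦ bound t)
    (Set.mem_univ y) (Set.mem_univ x)

theorem abs_min_sub_mul_sub_le (x y x' : ℝ) :
    |(min x x' - x * x') - (min y x' - y * x')| ≤ (1 + |x'|) * |x - y| := by
  have hmin : |min x x' - min y x'| ≤ |x - y| := by
    simpa using abs_min_sub_min_le_max x x' y x'
  calc |(min x x' - x * x') - (min y x' - y * x')|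
      = |(min x x' - min y x') - (x - y) * x'| := by ring_nf
    _ ≤ |min x x' - min y x'| + |(x - y) * x'| := abs_sub _ _
    _ ≤ (1 + |x'|) * |x - y| := by rw [abs_mul]; linarith

/-- The truncated Mercer expansions `k_S` of the Brownian bridge kernel are
uniformly Lipschitz in the first argument, uniformly in `S` and in the second
argument; consequently the limit kernel `min x x' - x x'` is Lipschitz in its
first argument uniformly in the second. -/
theorem truncated_mercer_uniform_lipschitz :
    ∃ K : ℝ, 0 < K ∧
      (∀ S : ℕ, ∀ x ∈ Set.Icc (0:ℝ) 1, ∀ y ∈ Set.Icc (0:ℝ) 1,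
        ∀ x' ∈ Set.Icc (0:ℝ) 1,
        |(∑ n ∈ Finset.range S,
              2 * Real.sin ((n+1) * π * x) * Real.sin ((n+1) * π * x') /
                (((n:ℝ)+1)^2 * π^2)) -
          (∑ n ∈ Finset.range S,
              2 * Real.sin ((n+1) * π * y) * Real.sin ((n+1) * π * x') /
                (((n:ℝ)+1)^2 * π^2))| ≤ K * |x - y|) ∧
      (∀ x ∈ Set.Icc (0:ℝ) 1, ∀ y ∈ Set.Icc (0:ℝ) 1, ∀ x' ∈ Set.Icc (0:ℝ) 1,
        |(min x x' - x * x') - (min y x' - y * x')| ≤ K * |x - y|) := by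
  have hK : 2 ≤ 2 * (1 + 3 * π) / π := by
    rw [le_div_iff₀ pi_pos]; linarith [pi_pos]
  refine ⟨2 * (1 + 3 * π) / π, by positivity, ?_, ?_⟩
  · exact fun S x _ y _ x' _ ↦ abs_truncatedBridgeKernel_sub_le S x y x'
  · intro x _ y _ x' ⟨hx'₀, hx'₁⟩
    calc _ ≤ (1 + |x'|) * |x - y| := abs_min_sub_mul_sub_le x y x'
      _ ≤ 2 * (1 + 3 * π) / π * |x - y| := by
        gcongr
        rw [abs_of_nonneg hx'₀]; linarith
end

section
/- Gradient of the log marginal likelihood in β: for the hierarchical Gaussian model with prior N(0, β⁻¹Σ) on ℝ^M (Σ symmetric positive definite) and likelihood N(d | û, σ²I), define L(β) = log ∫ p(d|û) N(û | 0, β⁻¹Σ) dû + log p(β). Then dL/dβ = M/(2β) + d(log p(β))/dβ − ½⟨m̃, Σ⁻¹ m̃⟩ − ½ tr(Σ⁻¹ Σ̃), where m̃ and Σ̃ are the posterior mean and covariance of û given d and β. -/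
/-!
Diagonalise `Σ = U diag(ℓ) Uᵀ` with `U` orthogonal. The measure-preserving substitution
`û = U v` turns the marginal-likelihood integral into a product of one-dimensional Gaussian
integrals, each evaluated by completing the square. With `w = Uᵀ d` and
`κᵢ(β) = β / ℓᵢ + σ⁻²` (the eigenvalues of `Σ̃⁻¹`) this gives, up to a constant in `β`,
`log ∫ … = (M/2) log β + ∑ᵢ (wᵢ² / (2σ⁴κᵢ) - ½ log κᵢ)`.
Differentiating term by term produces `∑ᵢ ℓᵢ⁻¹ (wᵢ / (σ²κᵢ))²` and `∑ᵢ ℓᵢ⁻¹ κᵢ⁻¹`,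
which the same diagonalisation identifies with `⟨m̃, Σ⁻¹ m̃⟩` and `tr (Σ⁻¹ Σ̃)`.
-/

open Real Matrix MeasureTheory

lemma integral_exp_neg_mul_sq_add_mul {a : ℝ} (ha : 0 < a) (c : ℝ) :
    ∫ t : ℝ, exp (-a * t ^ 2 + c * t) = √(π / a) * exp (c ^ 2 / (4 * a)) := by
  have hsq (t : ℝ) : -a * t ^ 2 + c * t = c ^ 2 / (4 * a) + -a * (t - c / (2 * a)) ^ 2 := by
    field_simp
    ring
  simp_rw [hsq, exp_add, integral_const_mul,
    integral_sub_right_eq_self (fun t => exp (-a * t ^ 2)), integral_gaussian, mul_comm]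

lemma integral_exp_neg_sq_sub_div_sub_mul_sq {s q : ℝ} (hs : s ≠ 0) (hκ : 0 < q + s⁻¹) (w : ℝ) :
    ∫ t : ℝ, exp (-(w - t) ^ 2 / (2 * s) - q / 2 * t ^ 2) =
      √(2 * π / (q + s⁻¹)) * exp (w ^ 2 / (2 * s ^ 2 * (q + s⁻¹)) - w ^ 2 / (2 * s)) := by
  have hexp (t : ℝ) : -(w - t) ^ 2 / (2 * s) - q / 2 * t ^ 2 =
      (-((q + s⁻¹) / 2) * t ^ 2 + w / s * t) - w ^ 2 / (2 * s) := by
    field_simp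
    ring
  have hπ : π / ((q + s⁻¹) / 2) = 2 * π / (q + s⁻¹) := by field_simp
  have hsq : (w / s) ^ 2 / (4 * ((q + s⁻¹) / 2)) = w ^ 2 / (2 * s ^ 2 * (q + s⁻¹)) := by
    field_simp
    ring
  simp_rw [hexp, exp_sub, integral_div, integral_exp_neg_mul_sq_add_mul (half_pos hκ), hπ, hsq,
    mul_div_assoc]

lemma hasDerivAt_sq_div_sub_log_div {l s w β : ℝ} (hs : s ≠ 0) (hκ : β * l⁻¹ + s⁻¹ ≠ 0) :
    HasDerivAt (fun b => w ^ 2 / (2 * s ^ 2 * (b * l⁻¹ + s⁻¹)) - log (b * l⁻¹ + s⁻¹) / 2)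
      (-(1 / 2) * (l⁻¹ * (s⁻¹ * (β * l⁻¹ + s⁻¹)⁻¹ * w) ^ 2) -
        (1 / 2) * (l⁻¹ * (β * l⁻¹ + s⁻¹)⁻¹)) β := by
  have hκ_deriv : HasDerivAt (fun b => b * l⁻¹ + s⁻¹) l⁻¹ β := by
    simpa using ((hasDerivAt_id β).mul_const l⁻¹).add_const s⁻¹
  refine (((hasDerivAt_const β (w ^ 2)).fun_div (hκ_deriv.const_mul (2 * s ^ 2))
    (by positivity)).fun_sub ((hκ_deriv.log hκ).div_const 2)).congr_deriv ?_
  generalize β * l⁻¹ + s⁻¹ = κ at hκ ⊢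
  field_simp
  ring

namespace Matrix

variable {ι : Type*} [Fintype ι] [DecidableEq ι]

lemma PosDef.exists_unitary_conj_diagonal {S : Matrix ι ι ℝ} (hS : S.PosDef) :
    ∃ U ∈ unitaryGroup ι ℝ, ∃ ℓ : ι → ℝ, (∀ i, 0 < ℓ i) ∧ S = U * diagonal ℓ * star U :=
  ⟨_, hS.1.eigenvectorUnitary.2, _, hS.eigenvalues_pos, by simpa using hS.1.spectral_theorem⟩

section Unitary

variable {U : Matrix ι ι ℝ}

lemma inv_unitary_conj (hU : U ∈ unitaryGroup ι ℝ) (A : Matrix ι ι ℝ) :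
    (U * A * star U)⁻¹ = U * A⁻¹ * star U := by
  rw [mul_inv_rev, mul_inv_rev, inv_eq_left_inv (Unitary.mul_star_self_of_mem hU),
    inv_eq_left_inv (Unitary.star_mul_self_of_mem hU), Matrix.mul_assoc]

lemma inv_unitary_conj_diagonal (hU : U ∈ unitaryGroup ι ℝ) {ℓ : ι → ℝ} (hℓ : ∀ i, ℓ i ≠ 0) :
    (U * diagonal ℓ * star U)⁻¹ = U * diagonal ℓ⁻¹ * star U := by
  have h : diagonal ℓ⁻¹ * diagonal ℓ = 1 := by
    rw [diagonal_mul_diagonal, ← diagonal_one]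
    congr with i
    exact inv_mul_cancel₀ (hℓ i)
  rw [inv_unitary_conj hU, inv_eq_left_inv h]

lemma unitary_conj_mul_unitary_conj (hU : U ∈ unitaryGroup ι ℝ) (A B : Matrix ι ι ℝ) :
    U * A * star U * (U * B * star U) = U * (A * B) * star U := by
  simp only [Matrix.mul_assoc]
  rw [← Matrix.mul_assoc (star U) U, Unitary.star_mul_self_of_mem hU, Matrix.one_mul]

lemma unitary_conj_diagonal_mul_add (hU : U ∈ unitaryGroup ι ℝ) (ℓ : ι → ℝ) (β s : ℝ) :
    U * diagonal (fun i => β * ℓ i + s) * star U =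
      β • (U * diagonal ℓ * star U) + s • (1 : Matrix ι ι ℝ) := by
  have hdiag : diagonal (fun i => β * ℓ i + s) = β • diagonal ℓ + s • 1 := by
    rw [← diagonal_one, ← diagonal_smul, ← diagonal_smul, diagonal_add]
    simp
  rw [hdiag, Matrix.mul_add, Matrix.add_mul, Matrix.mul_smul, Matrix.smul_mul, Matrix.mul_smul,
    Matrix.smul_mul, Matrix.mul_one, Unitary.mul_star_self_of_mem hU]

lemma det_unitary_conj_diagonal (hU : U ∈ unitaryGroup ι ℝ) (ℓ : ι → ℝ) :
    (U * diagonal ℓ * star U).det = ∏ i, ℓ i := by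
  rw [det_mul, det_mul, mul_comm, ← mul_assoc, ← det_mul, Unitary.star_mul_self_of_mem hU,
    det_one, one_mul, det_diagonal]

lemma trace_unitary_conj (hU : U ∈ unitaryGroup ι ℝ) (A : Matrix ι ι ℝ) :
    trace (U * A * star U) = trace A := by
  rw [trace_mul_cycle, Unitary.star_mul_self_of_mem hU, Matrix.one_mul]

lemma unitary_mulVec_star_mulVec (hU : U ∈ unitaryGroup ι ℝ) (x : ι → ℝ) :
    U *ᵥ (star U *ᵥ x) = x := by
  rw [mulVec_mulVec, Unitary.mul_star_self_of_mem hU, one_mulVec]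

lemma unitary_conj_mulVec_mulVec (hU : U ∈ unitaryGroup ι ℝ) (A : Matrix ι ι ℝ) (x : ι → ℝ) :
    (U * A * star U) *ᵥ (U *ᵥ x) = U *ᵥ (A *ᵥ x) := by
  rw [mulVec_mulVec, Matrix.mul_assoc, Matrix.mul_assoc, Unitary.star_mul_self_of_mem hU,
    Matrix.mul_one, mulVec_mulVec]

lemma dotProduct_unitary_mulVec (hU : U ∈ unitaryGroup ι ℝ) (x y : ι → ℝ) :
    (U *ᵥ x) ⬝ᵥ (U *ᵥ y) = x ⬝ᵥ y := by
  rw [dotProduct_mulVec, ← vecMul_transpose, vecMul_vecMul,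
    ← conjTranspose_eq_transpose_of_trivial, ← star_eq_conjTranspose,
    Unitary.star_mul_self_of_mem hU, vecMul_one]

end Unitary

end Matrix

section Integrals

variable {ι : Type*} [Fintype ι] [DecidableEq ι] {U : Matrix ι ι ℝ}

lemma integral_comp_unitary_mulVec (hU : U ∈ unitaryGroup ι ℝ) (f : (ι → ℝ) → ℝ) :
    ∫ x, f (U *ᵥ x) = ∫ x, f x := by
  have hdet : |U.det| = 1 := by
    have h := Unitary.star_mul_self_of_mem (det_of_mem_unitary hU)
    rw [star_trivial, ← sq, ← sq_abs] at h
    exact (pow_eq_one_iff_of_nonneg (abs_nonneg _) two_ne_zero).mp h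
  have hmp : MeasurePreserving (toLin' U) := by
    refine ⟨(toLin' U).continuous_of_finiteDimensional.measurable, ?_⟩
    rw [Real.map_matrix_volume_pi_eq_smul_volume_pi (by simp [← abs_pos, hdet]), abs_inv, hdet]
    simp
  exact hmp.integral_comp (toLin'OfInv (Unitary.star_mul_self_of_mem hU)
    (Unitary.mul_star_self_of_mem hU)).toContinuousLinearEquiv.toHomeomorph.measurableEmbedding f

lemma integral_exp_neg_sqDist_sub_quadForm (hU : U ∈ unitaryGroup ι ℝ) (μ : ι → ℝ) (s : ℝ)
    (d : ι → ℝ) :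
    ∫ u : ι → ℝ, exp (-(∑ i, (d i - u i) ^ 2) / (2 * s) -
        (u ⬝ᵥ ((U * diagonal μ * star U) *ᵥ u)) / 2) =
      ∏ i, ∫ t : ℝ, exp (-((star U *ᵥ d) i - t) ^ 2 / (2 * s) - μ i / 2 * t ^ 2) := by
  set w := star U *ᵥ d
  have hsqDist (v : ι → ℝ) : ∑ i, (d i - (U *ᵥ v) i) ^ 2 = ∑ i, (w i - v i) ^ 2 := by
    have hd : d - U *ᵥ v = U *ᵥ (w - v) := by
      rw [mulVec_sub, unitary_mulVec_star_mulVec hU]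
    have h := dotProduct_unitary_mulVec hU (w - v) (w - v)
    rw [← hd] at h
    simpa only [dotProduct, sq, Pi.sub_apply] using h
  have hquad (v : ι → ℝ) :
      (U *ᵥ v) ⬝ᵥ ((U * diagonal μ * star U) *ᵥ (U *ᵥ v)) = ∑ i, μ i * v i ^ 2 := by
    rw [unitary_conj_mulVec_mulVec hU, dotProduct_unitary_mulVec hU]
    simp only [dotProduct, mulVec_diagonal]
    exact Finset.sum_congr rfl fun i _ => by ring
  rw [← integral_comp_unitary_mulVec hU, ← integral_fintype_prod_volume_eq_prod]
  congr 1 with v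
  rw [hsqDist, hquad, ← exp_sum, ← Finset.sum_neg_distrib, Finset.sum_div, Finset.sum_div,
    ← Finset.sum_sub_distrib]
  congr 1
  exact Finset.sum_congr rfl fun i _ => by ring

end Integrals

section Posterior

variable {ι : Type*} [Fintype ι] [DecidableEq ι]

-- `s` is the noise variance `σ²`; these are `Σ̃` and `m̃` for the prior `N(0, β⁻¹ S)`.
noncomputable def posteriorCov (S : Matrix ι ι ℝ) (s β : ℝ) : Matrix ι ι ℝ :=
  (β • S⁻¹ + s⁻¹ • (1 : Matrix ι ι ℝ))⁻¹

noncomputable def posteriorMean (S : Matrix ι ι ℝ) (s β : ℝ) (d : ι → ℝ) : ι → ℝ :=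
  s⁻¹ • (posteriorCov S s β *ᵥ d)

variable {U : Matrix ι ι ℝ} {ℓ : ι → ℝ} {s β : ℝ}

lemma posteriorCov_unitary_conj_diagonal (hU : U ∈ unitaryGroup ι ℝ) (hℓ : ∀ i, ℓ i ≠ 0)
    (hκ : ∀ i, β * (ℓ i)⁻¹ + s⁻¹ ≠ 0) :
    posteriorCov (U * diagonal ℓ * star U) s β =
      U * diagonal (fun i => (β * (ℓ i)⁻¹ + s⁻¹)⁻¹) * star U := by
  rw [posteriorCov, inv_unitary_conj_diagonal hU hℓ, ← unitary_conj_diagonal_mul_add hU]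
  exact inv_unitary_conj_diagonal hU hκ

lemma trace_inv_mul_posteriorCov (hU : U ∈ unitaryGroup ι ℝ) (hℓ : ∀ i, ℓ i ≠ 0)
    (hκ : ∀ i, β * (ℓ i)⁻¹ + s⁻¹ ≠ 0) :
    trace ((U * diagonal ℓ * star U)⁻¹ * posteriorCov (U * diagonal ℓ * star U) s β) =
      ∑ i, (ℓ i)⁻¹ * (β * (ℓ i)⁻¹ + s⁻¹)⁻¹ := by
  rw [posteriorCov_unitary_conj_diagonal hU hℓ hκ, inv_unitary_conj_diagonal hU hℓ,
    unitary_conj_mul_unitary_conj hU, trace_unitary_conj hU, diagonal_mul_diagonal,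
    trace_diagonal]
  rfl

lemma posteriorMean_dotProduct_inv_mulVec (hU : U ∈ unitaryGroup ι ℝ) (hℓ : ∀ i, ℓ i ≠ 0)
    (hκ : ∀ i, β * (ℓ i)⁻¹ + s⁻¹ ≠ 0) (d : ι → ℝ) :
    posteriorMean (U * diagonal ℓ * star U) s β d ⬝ᵥ
        ((U * diagonal ℓ * star U)⁻¹ *ᵥ posteriorMean (U * diagonal ℓ * star U) s β d) =
      ∑ i, (ℓ i)⁻¹ * (s⁻¹ * (β * (ℓ i)⁻¹ + s⁻¹)⁻¹ * (star U *ᵥ d) i) ^ 2 := by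
  have hm : posteriorMean (U * diagonal ℓ * star U) s β d =
      U *ᵥ (s⁻¹ • (diagonal (fun i => (β * (ℓ i)⁻¹ + s⁻¹)⁻¹) *ᵥ (star U *ᵥ d))) := by
    rw [mulVec_smul, ← unitary_conj_mulVec_mulVec hU, unitary_mulVec_star_mulVec hU,
      ← posteriorCov_unitary_conj_diagonal hU hℓ hκ]
    rfl
  rw [hm, inv_unitary_conj_diagonal hU hℓ, unitary_conj_mulVec_mulVec hU,
    dotProduct_unitary_mulVec hU]
  simp only [dotProduct, mulVec_diagonal, Pi.smul_apply, smul_eq_mul, Pi.inv_apply]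
  exact Finset.sum_congr rfl fun i _ => by ring

end Posterior

section Evidence

noncomputable def marginalLikelihood {M : ℕ} (S : Matrix (Fin M) (Fin M) ℝ) (s : ℝ)
    (d : Fin M → ℝ) (b : ℝ) : ℝ :=
  ∫ uhat : Fin M → ℝ,
    ((2 * π * s) ^ (-(M:ℝ)/2) * exp (-(∑ i, (d i - uhat i)^2) / (2 * s))) *
      ((2 * π) ^ (-(M:ℝ)/2) * (b ^ (-(M:ℝ)) * S.det) ^ (-(1:ℝ)/2) *
        exp (-(b/2) * (uhat ⬝ᵥ (S⁻¹ *ᵥ uhat))))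

variable {M : ℕ} {U : Matrix (Fin M) (Fin M) ℝ} {ℓ : Fin M → ℝ} {s : ℝ}

lemma marginalLikelihood_unitary_conj_diagonal (hU : U ∈ unitaryGroup (Fin M) ℝ)
    (hℓ : ∀ i, 0 < ℓ i) (hs : 0 < s) (d : Fin M → ℝ) {b : ℝ} (hb : 0 ≤ b) :
    marginalLikelihood (U * diagonal ℓ * star U) s d b =
      (2 * π * s) ^ (-(M:ℝ)/2) *
        ((2 * π) ^ (-(M:ℝ)/2) * (b ^ (-(M:ℝ)) * (U * diagonal ℓ * star U).det) ^ (-(1:ℝ)/2)) *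
        ∏ i, √(2 * π / (b * (ℓ i)⁻¹ + s⁻¹)) *
          exp ((star U *ᵥ d) i ^ 2 / (2 * s ^ 2 * (b * (ℓ i)⁻¹ + s⁻¹)) -
            (star U *ᵥ d) i ^ 2 / (2 * s)) := by
  have hquad (u : Fin M → ℝ) : -(b/2) * (u ⬝ᵥ ((U * diagonal ℓ * star U)⁻¹ *ᵥ u)) =
      -((u ⬝ᵥ ((U * diagonal (fun i => b * (ℓ i)⁻¹) * star U) *ᵥ u)) / 2) := by
    rw [inv_unitary_conj_diagonal hU fun i => (hℓ i).ne', show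
      (diagonal fun i => b * (ℓ i)⁻¹) = b • diagonal ℓ⁻¹ from diagonal_smul b ℓ⁻¹,
      Matrix.mul_smul, Matrix.smul_mul, smul_mulVec, dotProduct_smul, smul_eq_mul]
    ring
  have hmul (a c x y : ℝ) : a * exp x * (c * exp (-y)) = a * c * exp (x - y) := by
    rw [exp_sub, exp_neg]
    ring
  simp_rw [marginalLikelihood, hquad, hmul, integral_const_mul,
    integral_exp_neg_sqDist_sub_quadForm hU]
  congr 1
  refine Finset.prod_congr rfl fun i _ => ?_
  exact integral_exp_neg_sq_sub_div_sub_mul_sq hs.ne' (by have := hℓ i; positivity) _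

lemma exists_log_marginalLikelihood_eq (hU : U ∈ unitaryGroup (Fin M) ℝ) (hℓ : ∀ i, 0 < ℓ i)
    (hs : 0 < s) (d : Fin M → ℝ) : ∃ C, ∀ b > 0,
    log (marginalLikelihood (U * diagonal ℓ * star U) s d b) =
      C + M / 2 * log b + ∑ i, ((star U *ᵥ d) i ^ 2 / (2 * s ^ 2 * (b * (ℓ i)⁻¹ + s⁻¹)) -
        log (b * (ℓ i)⁻¹ + s⁻¹) / 2) := by
  set w := star U *ᵥ d
  have hdet : 0 < (U * diagonal ℓ * star U).det := by
    rw [det_unitary_conj_diagonal hU]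
    exact Finset.prod_pos fun i _ => hℓ i
  refine ⟨log ((2 * π * s) ^ (-(M:ℝ)/2)) + log ((2 * π) ^ (-(M:ℝ)/2)) -
    log (U * diagonal ℓ * star U).det / 2 + ∑ i, (log (2 * π) / 2 - w i ^ 2 / (2 * s)),
    fun b hb => ?_⟩
  have hκ (i : Fin M) : 0 < b * (ℓ i)⁻¹ + s⁻¹ := by have := hℓ i; positivity
  have hfactor (i : Fin M) : 0 < √(2 * π / (b * (ℓ i)⁻¹ + s⁻¹)) *
      exp (w i ^ 2 / (2 * s ^ 2 * (b * (ℓ i)⁻¹ + s⁻¹)) - w i ^ 2 / (2 * s)) := by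
    have := hκ i
    positivity
  have hlog_factor (i : Fin M) :
      log (√(2 * π / (b * (ℓ i)⁻¹ + s⁻¹)) *
        exp (w i ^ 2 / (2 * s ^ 2 * (b * (ℓ i)⁻¹ + s⁻¹)) - w i ^ 2 / (2 * s))) =
      log (2 * π) / 2 - w i ^ 2 / (2 * s) +
        (w i ^ 2 / (2 * s ^ 2 * (b * (ℓ i)⁻¹ + s⁻¹)) - log (b * (ℓ i)⁻¹ + s⁻¹) / 2) := by
    have := hκ i
    rw [log_mul (by positivity) (exp_ne_zero _), log_exp, log_sqrt (by positivity),
      log_div (by positivity) this.ne']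
    ring
  have hbM : 0 < b ^ (-(M:ℝ)) := rpow_pos_of_pos hb _
  rw [marginalLikelihood_unitary_conj_diagonal hU hℓ hs d hb.le,
    log_mul (by positivity) (Finset.prod_pos fun i _ => hfactor i).ne',
    log_mul (by positivity) (by positivity), log_mul (by positivity) (by positivity),
    log_rpow (mul_pos hbM hdet), log_mul hbM.ne' hdet.ne', log_rpow hb,
    log_prod fun i _ => (hfactor i).ne']
  simp_rw [hlog_factor, Finset.sum_add_distrib]
  ring

end Evidence

/-- Gradient of the log marginal likelihood in `β` for the hierarchical Gaussian
model with prior `N(0, β⁻¹Σ)` on `ℝ^M` and likelihood `N(d | û, σ²I)`: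
`dL/dβ = M/(2β) + d(log p(β))/dβ - ½⟨m̃, Σ⁻¹m̃⟩ - ½ tr(Σ⁻¹Σ̃)`,
where `m̃, Σ̃` are the posterior mean and covariance of `û` given `d, β`. -/
theorem log_marginal_likelihood_deriv
    (M : ℕ) (S : Matrix (Fin M) (Fin M) ℝ) (hS : S.PosDef)
    (σ : ℝ) (hσ : 0 < σ) (d : Fin M → ℝ)
    (p : ℝ → ℝ) (hp : ∀ b > 0, 0 < p b) (hpdiff : ∀ b > 0, DifferentiableAt ℝ p b)
    (β : ℝ) (hβ : 0 < β)
    (L : ℝ → ℝ)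
    (hL : ∀ b : ℝ, L b =
      Real.log (∫ uhat : Fin M → ℝ,
        ((2 * π * σ^2) ^ (-(M:ℝ)/2) *
            Real.exp (-(∑ i, (d i - uhat i)^2) / (2 * σ^2))) *
          ((2 * π) ^ (-(M:ℝ)/2) * (b ^ (-(M:ℝ)) * S.det) ^ (-(1:ℝ)/2) *
            Real.exp (-(b/2) * (uhat ⬝ᵥ (S⁻¹ *ᵥ uhat))))) +
      Real.log (p b))
    (St : Matrix (Fin M) (Fin M) ℝ)
    (hSt : St = (β • S⁻¹ + (σ^2)⁻¹ • (1 : Matrix (Fin M) (Fin M) ℝ))⁻¹)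
    (mt : Fin M → ℝ) (hmt : mt = (σ^2)⁻¹ • (St *ᵥ d)) :
    HasDerivAt L
      ((M:ℝ)/(2*β) + deriv (fun b => Real.log (p b)) β -
        (1/2) * (mt ⬝ᵥ (S⁻¹ *ᵥ mt)) - (1/2) * (S⁻¹ * St).trace) β := by
  obtain ⟨U, hU, ℓ, hℓ, rfl⟩ := hS.exists_unitary_conj_diagonal
  obtain ⟨C, hC⟩ := exists_log_marginalLikelihood_eq hU hℓ (pow_pos hσ 2) d
  have hκ (i : Fin M) : 0 < β * (ℓ i)⁻¹ + (σ ^ 2)⁻¹ := by have := hℓ i; positivity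
  have hL_eq : ∀ᶠ b in nhds β, L b = C + M / 2 * log b + ∑ i, ((star U *ᵥ d) i ^ 2 /
      (2 * (σ ^ 2) ^ 2 * (b * (ℓ i)⁻¹ + (σ ^ 2)⁻¹)) - log (b * (ℓ i)⁻¹ + (σ ^ 2)⁻¹) / 2) +
      log (p b) := by
    filter_upwards [Ioi_mem_nhds hβ] with b hb
    rw [← hC b hb]
    exact hL b
  have hderiv := ((((hasDerivAt_log hβ.ne').const_mul ((M : ℝ) / 2)).const_add C).add
    (HasDerivAt.fun_sum (u := Finset.univ) fun i _ => hasDerivAt_sq_div_sub_log_div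
      (w := (star U *ᵥ d) i) (pow_pos hσ 2).ne' (hκ i).ne')).add
    ((hpdiff β hβ).log (hp β hβ).ne').hasDerivAt
  obtain rfl : St = posteriorCov (U * diagonal ℓ * star U) (σ ^ 2) β := hSt
  obtain rfl : mt = posteriorMean (U * diagonal ℓ * star U) (σ ^ 2) β d := hmt
  rw [posteriorMean_dotProduct_inv_mulVec hU (fun i => (hℓ i).ne') (fun i => (hκ i).ne'),
    trace_inv_mul_posteriorCov hU (fun i => (hℓ i).ne') (fun i => (hκ i).ne')]
  refine (hderiv.congr_of_eventuallyEq hL_eq).congr_deriv ?_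
  rw [Finset.sum_sub_distrib, ← Finset.mul_sum, ← Finset.mul_sum]
  field_simp
  ring
end
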